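/- arXiv:2004.07128 — 5 statements merged into one kernel-verified Lean document; each statement's English description precedes it below -/
import Mathlib

section
/- For the ECA rule 200, with local rule h(a,b,c) = b ∧ (a ∨ c), and for every n ≥ 1: every block-sequential update schedule τ yields the synchronous dynamics, i.e. f^{(τ)} = f. Consequently rule 200 has exactly one dynamics over all block-sequential update schedules. -/
/-- One round of a block-sequential update: all cells of rank `k` are updated
simultaneously by the ECA local rule `h`, reading the current states. -/
def ecaStep (n : ℕ) (h : Bool → Bool → Bool → Bool) (τ : ZMod n → ℕ) (k : ℕ)
    (x : ZMod n → Bool) : ZMod n → Bool :=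
  fun i => if τ i = k then h (x (i - 1)) (x i) (x (i + 1)) else x i

/-- State after processing ranks `0, 1, …, k` in increasing order. -/
def ecaUpTo (n : ℕ) (h : Bool → Bool → Bool → Bool) (τ : ZMod n → ℕ) :
    ℕ → (ZMod n → Bool) → ZMod n → Bool
  | 0 => ecaStep n h τ 0
  | k + 1 => fun x => ecaStep n h τ (k + 1) (ecaUpTo n h τ k x)

/-- Asynchronous global function `f^{(τ)}` for the block-sequential update
schedule `τ : ZMod n → ℕ` (rank of each cell): a cell keeps the value it gets
in the round where it is updated (it is never updated again afterwards). -/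
def ecaAsync (n : ℕ) (h : Bool → Bool → Bool → Bool) (τ : ZMod n → ℕ)
    (x : ZMod n → Bool) : ZMod n → Bool :=
  fun i => ecaUpTo n h τ (τ i) x i

/-- Synchronous global function of the ECA with local rule `h`. -/
def ecaSync (n : ℕ) (h : Bool → Bool → Bool → Bool) (x : ZMod n → Bool) :
    ZMod n → Bool :=
  fun i => h (x (i - 1)) (x i) (x (i + 1))

/-- Label of the arc `(i, j)` for schedule `τ`:
`true` = ⊕ (τ i ≥ τ j), `false` = ⊖ (τ i < τ j). -/
def lab (n : ℕ) (τ : ZMod n → ℕ) (i j : ZMod n) : Bool :=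
  decide (τ j ≤ τ i)

/-! Rule 200 only switches a cell off, and only when both neighbours are off. If a cell is on,
updating an on neighbour leaves it on (its own neighbour, our cell, is on), so a cell reads the same
neighbourhood value whether or not its neighbours have been updated before it. -/

abbrev rule200 (a b c : Bool) : Bool := b && (a || c)

theorem rule200_updated_neighbours (a' a b c c' p q : Bool) :
    rule200 (if p then rule200 a' a b else a) b (if q then rule200 b c c' else c) =
      rule200 a b c := by
  revert a' a b c c' p q; decide

theorem ecaUpTo_rule200 (n : ℕ) (τ : ZMod n → ℕ) (k : ℕ) (x : ZMod n → Bool) (i : ZMod n) :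
    ecaUpTo n rule200 τ k x i = if τ i ≤ k then ecaSync n rule200 x i else x i := by
  induction k generalizing i with
  | zero => simp [ecaUpTo, ecaStep, ecaSync]
  | succ k ih =>
    change (if τ i = k + 1 then _ else _) = _
    by_cases hk : τ i = k + 1
    · have neighbours := rule200_updated_neighbours (x (i - 1 - 1)) (x (i - 1)) (x i) (x (i + 1))
        (x (i + 1 + 1)) (decide (τ (i - 1) ≤ k)) (decide (τ (i + 1) ≤ k))
      simp only [decide_eq_true_eq] at neighbours
      simp only [hk, ih, ecaSync, sub_add_cancel, add_sub_cancel_right, le_refl, if_true,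
        Nat.not_succ_le_self, if_false, neighbours]
    · simp only [hk, if_false, ih, Nat.le_succ_iff, or_false]

theorem ecaAsync_rule200 (n : ℕ) (τ : ZMod n → ℕ) : ecaAsync n rule200 τ = ecaSync n rule200 := by
  funext x i
  simp [ecaAsync, ecaUpTo_rule200]

theorem rule_200_insensitive_general (n : ℕ) :
    (∀ τ : ZMod n → ℕ,
      ecaAsync n (fun a b c => b && (a || c)) τ = ecaSync n (fun a b c => b && (a || c))) ∧
    {g | ∃ τ : ZMod n → ℕ, g = ecaAsync n (fun a b c => b && (a || c)) τ}.ncard = 1 := by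
  have dynamics : {g | ∃ τ : ZMod n → ℕ, g = ecaAsync n rule200 τ} = {ecaSync n rule200} := by
    ext g
    simp [ecaAsync_rule200]
  exact ⟨ecaAsync_rule200 n, by rw [dynamics, Set.ncard_singleton]⟩

/-- Rule 200 (h a b c = b ∧ (a ∨ c)): every block-sequential update schedule
yields the synchronous dynamics; consequently there is exactly one dynamics. -/
theorem rule_200_insensitive (n : ℕ) (hn : 1 ≤ n) :
    (∀ τ : ZMod n → ℕ,
      ecaAsync n (fun a b c => b && (a || c)) τ = ecaSync n (fun a b c => b && (a || c))) ∧
    {g | ∃ τ : ZMod n → ℕ, g = ecaAsync n (fun a b c => b && (a || c)) τ}.ncard = 1 :=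
  rule_200_insensitive_general n
end

section
/- For the ECA rule 170, with local rule h(a,b,c) = c, and for every n ≥ 2: the number of distinct asynchronous global functions, i.e. the cardinality of the set { f^{(τ)} : τ a block-sequential update schedule on ℤ/nℤ }, equals 2^n − 1. -/
theorem ncard_setOf_exists_eq_false (α : Type*) [Finite α] :
    {d : α → Bool | ∃ j, d j = false}.ncard = 2 ^ Nat.card α - 1 := by
  have : {d : α → Bool | ∃ j, d j = false} = {fun _ => true}ᶜ := by
    ext d
    simp [funext_iff]
  rw [this, Set.ncard_compl, Set.ncard_singleton, Nat.card_fun,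
    Nat.card_eq_fintype_card (α := Bool), Fintype.card_bool]

section Schedule

variable {n : ℕ} (h : Bool → Bool → Bool → Bool) (τ : ZMod n → ℕ) (x : ZMod n → Bool)

theorem ecaUpTo_apply (k : ℕ) (j : ZMod n) :
    ecaUpTo n h τ k x j = if τ j ≤ k then ecaAsync n h τ x j else x j := by
  induction k generalizing j with
  | zero =>
    by_cases hj : τ j = 0
    · simp [ecaAsync, hj]
    · simp [ecaUpTo, ecaStep, hj]
  | succ k ih =>
    by_cases hj : τ j = k + 1
    · simp [ecaAsync, hj]
    · simp [ecaUpTo, ecaStep, hj, ih, Nat.le_succ_iff]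

theorem ecaAsync_apply (i : ZMod n) :
    ecaAsync n h τ x i =
      let y := fun j => if τ j < τ i then ecaAsync n h τ x j else x j
      h (y (i - 1)) (x i) (y (i + 1)) := by
  show ecaUpTo n h τ (τ i) x i = _
  cases hi : τ i with
  | zero => simp [ecaUpTo, ecaStep, hi]
  | succ m =>
    simp only [ecaUpTo, ecaStep, hi, if_true, ecaUpTo_apply, Nat.lt_succ_iff]
    simp

end Schedule

theorem ecaAsync_rule170_apply {n : ℕ} (τ : ZMod n → ℕ) (x : ZMod n → Bool) (i : ZMod n) :
    ecaAsync n (fun _ _ c => c) τ x i =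
      if τ (i + 1) < τ i then ecaAsync n (fun _ _ c => c) τ x (i + 1) else x (i + 1) :=
  ecaAsync_apply _ τ x i

section Runs

variable {n : ℕ}

def descents (τ : ZMod n → ℕ) (i : ZMod n) : Bool :=
  decide (τ (i + 1) < τ i)

noncomputable def runLength (d : ZMod n → Bool) (i : ZMod n) : ℕ :=
  sInf {t : ℕ | d (i + t) = false}

noncomputable def runShift (d : ZMod n → Bool) (x : ZMod n → Bool) (i : ZMod n) : Bool :=
  x (i + runLength d i + 1)

theorem exists_descents_eq_false [NeZero n] (τ : ZMod n → ℕ) :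
    ∃ j, descents τ j = false := by
  obtain ⟨j, hj⟩ := Finite.exists_min τ
  exact ⟨j, by simpa [descents] using hj (j + 1)⟩

variable {d : ZMod n → Bool}

theorem runLength_of_false {i : ZMod n} (hi : d i = false) : runLength d i = 0 :=
  Nat.sInf_eq_zero.2 (Or.inl (by simpa using hi))

theorem val_sub_mem_runSet [NeZero n] {j : ZMod n} (hj : d j = false) (i : ZMod n) :
    (j - i).val ∈ {t : ℕ | d (i + t) = false} := by
  simpa [ZMod.natCast_zmod_val] using hj

theorem runLength_lt [NeZero n] (hd : ∃ j, d j = false) (i : ZMod n) : runLength d i < n := by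
  obtain ⟨j, hj⟩ := hd
  exact (Nat.sInf_le (val_sub_mem_runSet hj i)).trans_lt (ZMod.val_lt _)

theorem runLength_of_true [NeZero n] (hd : ∃ j, d j = false) {i : ZMod n} (hi : d i = true) :
    runLength d i = runLength d (i + 1) + 1 := by
  obtain ⟨j, hj⟩ := hd
  have hpos : 1 ≤ runLength d i := by
    refine Nat.one_le_iff_ne_zero.2 fun h0 => ?_
    have := Nat.sInf_mem ⟨_, val_sub_mem_runSet hj i⟩
    simp_all [runLength]
  rw [runLength, ← Nat.sInf_add hpos, runLength]
  congr 2
  ext t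
  simp only [Set.mem_ofPred_eq, Nat.cast_add, Nat.cast_one, add_assoc, add_comm (1 : ZMod n)]

end Runs

section Rule170

variable {n : ℕ} [NeZero n]

theorem ecaAsync_rule170_eq_runShift (τ : ZMod n → ℕ) :
    ecaAsync n (fun _ _ c => c) τ = runShift (descents τ) := by
  have hd := exists_descents_eq_false τ
  funext x i
  induction hτ : τ i using Nat.strong_induction_on generalizing i with
  | _ m ih =>
    rw [ecaAsync_rule170_apply, runShift]
    by_cases hlt : τ (i + 1) < τ i
    · rw [if_pos hlt, ih _ (hτ ▸ hlt) (i + 1) rfl, runShift,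
        runLength_of_true hd (decide_eq_true hlt)]
      push_cast
      ring_nf
    · rw [if_neg hlt, runLength_of_false (decide_eq_false hlt)]
      simp

theorem descents_runLength {d : ZMod n → Bool} (hd : ∃ j, d j = false) :
    descents (runLength d) = d := by
  funext i
  cases hi : d i
  · simp [descents, runLength_of_false hi]
  · simp [descents, runLength_of_true hd hi]

theorem runLength_eq_of_runShift_eq {d d' : ZMod n → Bool} (hd : ∃ j, d j = false)
    (hd' : ∃ j, d' j = false) (h : runShift d = runShift d') (i : ZMod n) :
    runLength d i = runLength d' i := by
  have hcast : (runLength d i : ZMod n) = runLength d' i := by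
    have := congrFun (congrFun h fun j => decide (j = i + runLength d i + 1)) i
    simpa [runShift, eq_comm] using this
  simpa [ZMod.val_cast_of_lt (runLength_lt hd i), ZMod.val_cast_of_lt (runLength_lt hd' i)]
    using congrArg ZMod.val hcast

theorem runShift_injOn : Set.InjOn runShift {d : ZMod n → Bool | ∃ j, d j = false} :=
  fun d hd d' hd' h => by
    rw [← descents_runLength hd, ← descents_runLength hd',
      funext (runLength_eq_of_runShift_eq hd hd' h)]

theorem setOf_ecaAsync_rule170_eq_image :
    {g | ∃ τ : ZMod n → ℕ, g = ecaAsync n (fun _ _ c => c) τ}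
      = runShift '' {d : ZMod n → Bool | ∃ j, d j = false} := by
  ext g
  constructor
  · rintro ⟨τ, rfl⟩
    exact ⟨descents τ, exists_descents_eq_false τ, (ecaAsync_rule170_eq_runShift τ).symm⟩
  · rintro ⟨d, hd, rfl⟩
    exact ⟨runLength d, by rw [ecaAsync_rule170_eq_runShift, descents_runLength hd]⟩

end Rule170

/-- Rule 170 (h a b c = c): the number of distinct asynchronous global
functions equals $2^n - 1$. -/
theorem rule_170_count (n : ℕ) (hn : 2 ≤ n) :
    {g | ∃ τ : ZMod n → ℕ, g = ecaAsync n (fun _ _ c => c) τ}.ncard = 2 ^ n - 1 := by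
  have : NeZero n := ⟨by omega⟩
  rw [setOf_ecaAsync_rule170_eq_image, runShift_injOn.ncard_image,
    ncard_setOf_exists_eq_false, Nat.card_zmod]
end

section
/- For the ECA rule 44, with local rule h(a,b,c) = (¬a ∧ b) ∨ (a ∧ ¬b ∧ c), and for every n > 3: for all block-sequential update schedules τ and τ', the asynchronous global functions differ, f^{(τ)} ≠ f^{(τ')}, if and only if there exists a cell i ∈ ℤ/nℤ with lab_τ((i−1,i)) ≠ lab_τ'((i−1,i)). -/
/-! Rule 44 cannot see an update of its right neighbour that was computed from the cell's own
current state: `rule44 a b (rule44 b c d) = rule44 a b c`. Hence under every schedule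
`f^{(τ)}(x)_j = rule44 ℓ_j x_j x_{j+1}`, where the left input `ℓ_j` is `x_{j-1}` across a ⊕ arc
`(j-1, j)` and `f^{(τ)}(x)_{j-1}` across a ⊖ arc, and by induction on `τ j` the dynamics depend
only on these labels.

Conversely, let `(i-1, i)` be ⊕ for `τ` and ⊖ for `σ`, and take `x_i = 1`. Since
`rule44 a 1 c = ¬a`, cell `i` ends in `¬x_{i-1}` under `τ` and in `¬f^{(σ)}(x)_{i-1}` under `σ`,
and these differ as soon as the left input of cell `i-1` under `σ` is `1`. Taking `x = 1` exactly
on `{i, i-2}` achieves this, because the left input of cell `i-2` is then `0`: `x` vanishes at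
`i-3` and `i-4`, and `rule44 a 0 0 = 0`. This needs `i-4 ≠ i`; for `n = 4`, when the arc
`(i-3, i-2)` is ⊖, take `x = 1` on `{i, i-2, i-3}` instead. -/

section Schedules

variable {n : ℕ} {h : Bool → Bool → Bool → Bool} {τ : ZMod n → ℕ} {x : ZMod n → Bool}
  {k : ℕ} {j : ZMod n}

lemma ecaUpTo_of_lt (hk : k < τ j) : ecaUpTo n h τ k x j = x j := by
  induction k with
  | zero => simp [ecaUpTo, ecaStep, hk.ne']
  | succ k ih => simp [ecaUpTo, ecaStep, hk.ne', ih (by omega)]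

lemma ecaUpTo_of_le (hk : τ j ≤ k) : ecaUpTo n h τ k x j = ecaAsync n h τ x j := by
  induction k with
  | zero => simp only [ecaAsync, Nat.le_zero.mp hk]
  | succ k ih =>
    rcases hk.eq_or_lt with hk | hk
    · simp only [ecaAsync, hk]
    · simp [ecaUpTo, ecaStep, hk.ne, ih (by omega)]

lemma ecaAsync_apply_s6 :
    ecaAsync n h τ x j =
      h (if τ (j - 1) < τ j then ecaAsync n h τ x (j - 1) else x (j - 1)) (x j)
        (if τ (j + 1) < τ j then ecaAsync n h τ x (j + 1) else x (j + 1)) := by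
  have hread : ∀ k m, ecaUpTo n h τ k x m = if τ m ≤ k then ecaAsync n h τ x m else x m := by
    intro k m
    split_ifs with hm
    · exact ecaUpTo_of_le hm
    · exact ecaUpTo_of_lt (not_le.mp hm)
  show ecaUpTo n h τ (τ j) x j = _
  rcases hj : τ j with _ | k
  · simp [ecaUpTo, ecaStep, hj]
  · simp [ecaUpTo, ecaStep, hj, hread]

end Schedules

lemma ZMod.natCast_ne_natCast_of_lt {n a b : ℕ} (ha : a < n) (hb : b < n) (hab : a ≠ b) :
    (a : ZMod n) ≠ b := by
  rwa [Ne, ZMod.natCast_eq_natCast_iff', Nat.mod_eq_of_lt ha, Nat.mod_eq_of_lt hb]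

def rule44 : Bool → Bool → Bool → Bool := fun a b c => (!a && b) || (a && !b && c)

lemma rule44_rule44_right (a b c d : Bool) : rule44 a b (rule44 b c d) = rule44 a b c := by
  revert a b c d; decide

section Rule44

variable {n : ℕ} {σ τ : ZMod n → ℕ} {x : ZMod n → Bool} {i j : ZMod n}

def leftInput (σ : ZMod n → ℕ) (x : ZMod n → Bool) (j : ZMod n) : Bool :=
  if lab n σ (j - 1) j then x (j - 1) else ecaAsync n rule44 σ x (j - 1)

lemma ecaAsync_rule44_apply :
    ecaAsync n rule44 σ x j = rule44 (leftInput σ x j) (x j) (x (j + 1)) := by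
  have hleft : (if σ (j - 1) < σ j then ecaAsync n rule44 σ x (j - 1) else x (j - 1)) =
      leftInput σ x j := by
    by_cases hj : σ (j - 1) < σ j <;> simp [leftInput, lab, hj]
  rw [ecaAsync_apply_s6, hleft]
  split_ifs with hj
  · rw [ecaAsync_apply_s6 (j := j + 1), add_sub_cancel_right, if_neg (lt_asymm hj),
      rule44_rule44_right]
  · rfl

lemma ecaAsync_rule44_eq_of_lab (hlab : ∀ j, lab n τ (j - 1) j = lab n σ (j - 1) j) :
    ecaAsync n rule44 τ = ecaAsync n rule44 σ := by
  funext x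
  suffices ∀ k j, τ j = k → ecaAsync n rule44 τ x j = ecaAsync n rule44 σ x j from
    funext fun j => this _ j rfl
  intro k
  induction k using Nat.strong_induction_on with
  | _ k ih =>
    intro j hj
    rw [ecaAsync_rule44_apply, ecaAsync_rule44_apply, leftInput, leftInput, ← hlab j]
    split_ifs with hread
    · rfl
    · rw [ih (τ (j - 1)) (by simp [lab] at hread; omega) (j - 1) rfl]

lemma leftInput_eq_true (hx : x (j - 1) = true)
    (h : lab n σ (j - 1) j = false → leftInput σ x (j - 1) = false) :
    leftInput σ x j = true := by
  unfold leftInput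
  split_ifs with hj
  · exact hx
  · rw [ecaAsync_rule44_apply, h (by simpa using hj), hx]
    rfl

lemma exists_leftInput_eq_true (hn : 3 < n) (hσ : lab n σ (i - 1) i = false) :
    ∃ x : ZMod n → Bool, x i = true ∧ leftInput σ x (i - 1) = true := by
  have e2 : i - 1 - 1 = i - 2 := by ring
  have e3 : i - 2 - 1 = i - 3 := by ring
  by_cases hfull : n = 4 ∧ σ (i - 3) < σ (i - 2)
  · obtain ⟨rfl, hσ32⟩ := hfull
    refine ⟨fun j => decide (j = i ∨ j = i - 2 ∨ j = i - 3), by simp, ?_⟩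
    refine leftInput_eq_true (by simp [e2]) fun hσ21 => ?_
    have e4 : i - 3 - 1 = i := by
      rw [sub_sub, sub_eq_self]; decide
    have h3i : σ (i - 3) ≤ σ i := by
      simp only [lab, e2, decide_eq_false_iff_not, not_le] at hσ hσ21
      omega
    rw [e2, leftInput, e3, if_neg (by simpa [lab] using hσ32), ecaAsync_rule44_apply, leftInput,
      e4, if_pos (by simpa [lab] using h3i)]
    simp [rule44]
  · have h30 : (3 : ZMod n) ≠ 0 := by
      exact_mod_cast ZMod.natCast_ne_natCast_of_lt (b := 0) hn (by omega) (by omega)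
    have h32 : (3 : ZMod n) ≠ 2 := by
      exact_mod_cast ZMod.natCast_ne_natCast_of_lt (b := 2) hn (by omega) (by omega)
    refine ⟨fun j => decide (j = i ∨ j = i - 2), by simp, ?_⟩
    refine leftInput_eq_true (by simp [e2]) fun _ => ?_
    rw [e2, leftInput, e3]
    split_ifs with h23
    · simp [sub_eq_self, h30, h32]
    · have hn5 : 4 < n := by
        simp only [lab, decide_eq_true_eq, not_le] at h23
        omega
      have h40 : (4 : ZMod n) ≠ 0 := by
        exact_mod_cast ZMod.natCast_ne_natCast_of_lt (b := 0) hn5 (by omega) (by omega)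
      have h42 : (4 : ZMod n) ≠ 2 := by
        exact_mod_cast ZMod.natCast_ne_natCast_of_lt (b := 2) hn5 (by omega) (by omega)
      have e4 : i - 3 - 1 = i - 4 := by ring
      rw [ecaAsync_rule44_apply, leftInput, e4, ecaAsync_rule44_apply (j := i - 4),
        show i - 4 + 1 = i - 3 by ring, show i - 3 + 1 = i - 2 by ring]
      simp [rule44, sub_eq_self, h30, h32, h40, h42]

lemma ecaAsync_rule44_ne_of_lab (hn : 3 < n) (hτ : lab n τ (i - 1) i = true)
    (hσ : lab n σ (i - 1) i = false) :
    ecaAsync n rule44 τ ≠ ecaAsync n rule44 σ := by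
  obtain ⟨x, hxi, hread⟩ := exists_leftInput_eq_true hn hσ
  intro heq
  have hi := congrFun (congrFun heq x) i
  rw [ecaAsync_rule44_apply, ecaAsync_rule44_apply, leftInput, leftInput, hτ, hσ, if_pos rfl,
    if_neg Bool.false_ne_true, ecaAsync_rule44_apply (j := i - 1), hread, sub_add_cancel, hxi] at hi
  cases x (i - 1) <;> simp [rule44] at hi

end Rule44

/-- Rule 44 (h a b c = (¬a ∧ b) ∨ (a ∧ ¬b ∧ c)): two schedules give different
dynamics iff they differ on the label of some arc $(i-1,i)$. -/
theorem rule_44_dynamics_differ_iff (n : ℕ) (hn : 3 < n) (τ τ' : ZMod n → ℕ) :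
    ecaAsync n (fun a b c => (!a && b) || (a && !b && c)) τ ≠
      ecaAsync n (fun a b c => (!a && b) || (a && !b && c)) τ' ↔
    ∃ i : ZMod n, lab n τ (i - 1) i ≠ lab n τ' (i - 1) i := by
  constructor
  · intro hne
    by_contra! hlab
    exact hne (ecaAsync_rule44_eq_of_lab hlab)
  · rintro ⟨i, hi⟩
    cases hτ : lab n τ (i - 1) i
    · exact (ecaAsync_rule44_ne_of_lab hn (by simpa [hτ] using hi.symm) hτ).symm
    · exact ecaAsync_rule44_ne_of_lab hn hτ (by simpa [hτ] using hi.symm)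
end

section
/- For every n > 3 and for each of the four ECA local rules h(a,b,c) = (¬a ∧ b) ∨ (a ∧ ¬b ∧ ¬c) (rule 28), h(a,b,c) = a ∧ ¬b ∧ c (rule 32), h(a,b,c) = (¬a ∧ b) ∨ (a ∧ ¬b ∧ c) (rule 44), and h(a,b,c) = b ∧ (¬a ∨ c) (rule 140): the number of distinct asynchronous global functions, i.e. the cardinality of { f^{(τ)} : τ a block-sequential update schedule on ℤ/nℤ }, equals 2^n − 1. -/
/-!
Rules 28 and 44, and the mirror image of rule 140, are right-absorbing,
`h a b (h b c d) = h a b c`: it does not matter whether a cell reads the old or the updated state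
of its right neighbour. Hence `f^{(τ)}` depends only on the labels of the arcs `(j - 1, j)`. A cell
whose label is ⊕ (it reads the old state of `j - 1`) computes exactly as under the synchronous
update; for a cell labelled ⊖, a configuration that is `true` except at one cell near `j` (this
needs `n > 3`) shows that it does not. So two schedules give the same function iff their label
vectors agree. The realisable label vectors are those with some ⊕: a cell of minimal rank carries
⊕, and conversely ranking each cell by its distance back to the nearest ⊕ realises the vector.
That makes `2 ^ n - 1` functions. For rule 32 the asynchronous value at `j` is the synchronous one
if `j` is a local minimum of `τ` and `false` otherwise, and the local-minimum indicator plays the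
role of the label vector. Rule 140 reduces to its mirror image by reflecting the ring.
-/

namespace ECA

variable {n : ℕ} {h : Bool → Bool → Bool → Bool} {τ τ' : ZMod n → ℕ}

lemma ecaUpTo_apply (h : Bool → Bool → Bool → Bool) (τ : ZMod n → ℕ) (k : ℕ)
    (x : ZMod n → Bool) (j : ZMod n) :
    ecaUpTo n h τ k x j = if τ j ≤ k then ecaAsync n h τ x j else x j := by
  induction k with
  | zero =>
    by_cases h0 : τ j = 0
    · simp [ecaAsync, h0]
    · simp [ecaUpTo, ecaStep, h0]
  | succ k ih =>
    by_cases hk : τ j = k + 1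
    · simp [ecaAsync, hk]
    · simp only [ecaUpTo, ecaStep, hk, if_false, ih]
      exact if_congr (by omega) rfl rfl

lemma ecaAsync_apply (h : Bool → Bool → Bool → Bool) (τ : ZMod n → ℕ) (x : ZMod n → Bool)
    (j : ZMod n) :
    ecaAsync n h τ x j =
      h (if τ (j - 1) < τ j then ecaAsync n h τ x (j - 1) else x (j - 1)) (x j)
        (if τ (j + 1) < τ j then ecaAsync n h τ x (j + 1) else x (j + 1)) := by
  show ecaUpTo n h τ (τ j) x j = _
  rcases hk : τ j with _ | k
  · simp [ecaUpTo, ecaStep, hk]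
  · simp only [ecaUpTo, ecaStep, hk, if_true, ecaUpTo_apply, Nat.lt_succ_iff,
      (Nat.lt_succ_self k).not_ge, if_false]

lemma ecaStep_comp_neg (h : Bool → Bool → Bool → Bool) (τ : ZMod n → ℕ) (k : ℕ)
    (x : ZMod n → Bool) :
    ecaStep n (fun a b c => h c b a) (τ ∘ Neg.neg) k (x ∘ Neg.neg) =
      ecaStep n h τ k x ∘ Neg.neg := by
  funext i
  simp [ecaStep, sub_eq_add_neg, add_comm]

lemma ecaUpTo_comp_neg (h : Bool → Bool → Bool → Bool) (τ : ZMod n → ℕ) (k : ℕ)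
    (x : ZMod n → Bool) :
    ecaUpTo n (fun a b c => h c b a) (τ ∘ Neg.neg) k (x ∘ Neg.neg) =
      ecaUpTo n h τ k x ∘ Neg.neg := by
  induction k with
  | zero => exact ecaStep_comp_neg h τ 0 x
  | succ k ih => simp only [ecaUpTo, ih, ecaStep_comp_neg]

lemma ecaAsync_comp_neg (h : Bool → Bool → Bool → Bool) (τ : ZMod n → ℕ) (x : ZMod n → Bool) :
    ecaAsync n (fun a b c => h c b a) (τ ∘ Neg.neg) (x ∘ Neg.neg) = ecaAsync n h τ x ∘ Neg.neg := by
  funext i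
  simp [ecaAsync, ecaUpTo_comp_neg]

lemma ncard_setOf_eq_of_eq_iff {α β γ : Type*} {F : α → β} {L : α → γ}
    (h : ∀ a b, F a = F b ↔ L a = L b) : {y | ∃ a, y = F a}.ncard = (Set.range L).ncard := by
  refine Set.ncard_congr (fun y hy => L hy.choose) (fun y hy => ⟨_, rfl⟩) ?_ ?_
  · intro y y' hy hy' he
    rw [hy.choose_spec, hy'.choose_spec]
    exact (h _ _).2 he
  · rintro _ ⟨a, rfl⟩
    have hy : ∃ b, F a = F b := ⟨a, rfl⟩
    exact ⟨F a, hy, ((h _ _).1 hy.choose_spec).symm⟩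

lemma ncard_setOf_ecaAsync_reverse (h : Bool → Bool → Bool → Bool) :
    {g | ∃ τ, g = ecaAsync n (fun a b c => h c b a) τ}.ncard =
      {g | ∃ τ, g = ecaAsync n h τ}.ncard := by
  set reflect : ((ZMod n → Bool) → ZMod n → Bool) → (ZMod n → Bool) → ZMod n → Bool :=
    fun g x => g (x ∘ Neg.neg) ∘ Neg.neg
  have hreflect (h : Bool → Bool → Bool → Bool) (τ : ZMod n → ℕ) :
      reflect (ecaAsync n h τ) = ecaAsync n (fun a b c => h c b a) (τ ∘ Neg.neg) := by
    funext x
    have hx : (x ∘ Neg.neg) ∘ Neg.neg = x := by funext i; simp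
    conv_rhs => rw [← hx]
    exact (ecaAsync_comp_neg h τ _).symm
  have hinj : Function.Injective reflect :=
    Function.LeftInverse.injective (g := reflect) fun g => by
      funext x
      simp [reflect, Function.comp_def]
  rw [← Set.ncard_image_of_injective _ hinj]
  congr 1
  ext g
  constructor
  · rintro ⟨_, ⟨τ, rfl⟩, rfl⟩
    exact ⟨τ ∘ Neg.neg, hreflect _ τ⟩
  · rintro ⟨τ, rfl⟩
    refine ⟨_, ⟨τ ∘ Neg.neg, rfl⟩, ?_⟩
    rw [hreflect]
    show ecaAsync n h ((τ ∘ Neg.neg) ∘ Neg.neg) = _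
    congr 1
    funext i
    simp

lemma ecaAsync_eq_iff_of_labels (L : (ZMod n → ℕ) → ZMod n → Bool)
    (hdet : ∀ τ τ', L τ = L τ' → ecaAsync n h τ = ecaAsync n h τ')
    (hsync : ∀ τ j, L τ j = true ↔ ∀ x, ecaAsync n h τ x j = ecaSync n h x j) :
    ecaAsync n h τ = ecaAsync n h τ' ↔ L τ = L τ' := by
  refine ⟨fun he => funext fun j => ?_, hdet τ τ'⟩
  rw [Bool.eq_iff_iff, hsync, hsync, he]

lemma ncard_exists_eq_true [NeZero n] :
    {v : ZMod n → Bool | ∃ j, v j = true}.ncard = 2 ^ n - 1 := by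
  have hcompl : {v : ZMod n → Bool | ∃ j, v j = true} = {fun _ => false}ᶜ := by
    ext v
    simp [funext_iff]
  rw [hcompl, Set.ncard_compl, Set.ncard_singleton, Nat.card_eq_fintype_card, Fintype.card_fun,
    ZMod.card, Fintype.card_bool]

/-- `leftLab n τ j = false` exactly when cell `j` reads the updated state of cell `j - 1`. -/
def leftLab (n : ℕ) (τ : ZMod n → ℕ) (j : ZMod n) : Bool := lab n τ (j - 1) j

lemma leftLab_eq_false_iff {j : ZMod n} : leftLab n τ j = false ↔ τ (j - 1) < τ j := by
  simp [leftLab, lab]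

lemma exists_leftLab_eq_true [NeZero n] (τ : ZMod n → ℕ) : ∃ j, leftLab n τ j = true := by
  obtain ⟨j, hj⟩ := Finite.exists_min τ
  exact ⟨j, decide_eq_true (hj _)⟩

lemma range_leftLab [NeZero n] : Set.range (leftLab n) = {v | ∃ j, v j = true} := by
  refine Set.Subset.antisymm (Set.range_subset_iff.2 exists_leftLab_eq_true) ?_
  rintro v ⟨j₀, hj₀⟩
  have hex : ∀ j, ∃ k : ℕ, v (j - k) = true := fun j => ⟨(j - j₀).val, by simpa using hj₀⟩
  refine ⟨fun j => Nat.find (hex j), funext fun j => ?_⟩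
  cases hv : v j
  · obtain ⟨k, hk⟩ := Nat.exists_eq_succ_of_ne_zero (by simp [hv] : Nat.find (hex j) ≠ 0)
    refine leftLab_eq_false_iff.2 (hk ▸ Nat.lt_succ_of_le (Nat.find_le ?_))
    have hjk := Nat.find_spec (hex j)
    rwa [hk, Nat.cast_succ, add_comm, ← sub_sub] at hjk
  · have h0 : Nat.find (hex j) = 0 := (Nat.find_eq_zero _).2 (by simpa using hv)
    simp [leftLab, lab, h0]

lemma ecaAsync_apply_of_absorbing (hright : ∀ a b c d, h a b (h b c d) = h a b c)
    (τ : ZMod n → ℕ) (x : ZMod n → Bool) (j : ZMod n) :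
    ecaAsync n h τ x j =
      h (if leftLab n τ j then x (j - 1) else ecaAsync n h τ x (j - 1)) (x j) (x (j + 1)) := by
  rw [ecaAsync_apply]
  simp only [leftLab, lab, decide_eq_true_eq, ← not_lt, ite_not]
  by_cases hr : τ (j + 1) < τ j
  · rw [if_pos hr, ecaAsync_apply h τ x (j + 1), add_sub_cancel_right,
      if_neg (show ¬τ j < τ (j + 1) by omega), hright]
  · rw [if_neg hr]

lemma ecaAsync_add_one_of_absorbing (hright : ∀ a b c d, h a b (h b c d) = h a b c)
    (τ : ZMod n → ℕ) (x : ZMod n → Bool) (i : ZMod n) :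
    ecaAsync n h τ x (i + 1) =
      h (if leftLab n τ (i + 1) then x i else ecaAsync n h τ x i) (x (i + 1)) (x (i + 1 + 1)) := by
  simpa using ecaAsync_apply_of_absorbing hright τ x (i + 1)

lemma ecaAsync_eq_of_leftLab_eq (hright : ∀ a b c d, h a b (h b c d) = h a b c)
    (hτ : leftLab n τ = leftLab n τ') :
    ecaAsync n h τ = ecaAsync n h τ' := by
  funext x j
  induction hj : τ j using Nat.strong_induction_on generalizing j with
  | _ t ih =>
    rw [ecaAsync_apply_of_absorbing hright τ x j, ecaAsync_apply_of_absorbing hright τ' x j, ← hτ]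
    cases hl : leftLab n τ j
    · rw [ih _ (hj ▸ leftLab_eq_false_iff.1 hl) (j - 1) rfl]
    · rfl

lemma ecaAsync_apply_eq_ecaSync (hright : ∀ a b c d, h a b (h b c d) = h a b c) {j : ZMod n}
    (hl : leftLab n τ j = true) (x : ZMod n → Bool) :
    ecaAsync n h τ x j = ecaSync n h x j := by
  rw [ecaAsync_apply_of_absorbing hright, hl]
  rfl

lemma leftLab_eq_true_iff (hright : ∀ a b c d, h a b (h b c d) = h a b c) {j : ZMod n}
    (hdist : leftLab n τ j = false → ∃ x, ecaAsync n h τ x j ≠ ecaSync n h x j) :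
    leftLab n τ j = true ↔ ∀ x, ecaAsync n h τ x j = ecaSync n h x j := by
  refine ⟨ecaAsync_apply_eq_ecaSync hright, fun hsync => ?_⟩
  by_contra hl
  obtain ⟨x, hx⟩ := hdist (by simpa using hl)
  exact hx (hsync x)

lemma ncard_setOf_ecaAsync_of_absorbing [NeZero n]
    (hright : ∀ a b c d, h a b (h b c d) = h a b c)
    (hdist : ∀ τ j, leftLab n τ j = false → ∃ x, ecaAsync n h τ x j ≠ ecaSync n h x j) :
    {g | ∃ τ, g = ecaAsync n h τ}.ncard = 2 ^ n - 1 := by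
  rw [ncard_setOf_eq_of_eq_iff fun τ τ' => ecaAsync_eq_iff_of_labels (leftLab n)
      (fun _ _ => ecaAsync_eq_of_leftLab_eq hright)
      (fun τ j => leftLab_eq_true_iff hright (hdist τ j)),
    range_leftLab, ncard_exists_eq_true]

lemma ecaAsync_add_natCast_eq_xor (hright : ∀ a b c d, h a b (h b c d) = h a b c)
    (hflip : ∀ a c, h a true c = !a) {x : ZMod n → Bool}
    {p : ZMod n} {t : ℕ}
    (hrun : ∀ i < t, leftLab n τ (p + i + 1) = false ∧ x (p + i + 1) = true) :
    ecaAsync n h τ x (p + t) = xor (ecaAsync n h τ x p) (decide (Odd t)) := by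
  induction t with
  | zero => simp
  | succ t ih =>
    obtain ⟨hl, hx⟩ := hrun t t.lt_succ_self
    rw [Nat.cast_succ, ← add_assoc, ecaAsync_add_one_of_absorbing hright, hl, hx, hflip,
      ih fun i hi => hrun i (by omega)]
    simp only [Nat.odd_add_one, decide_not, Bool.xor_not, Bool.false_eq_true, if_false]

lemma exists_leftLab_run [NeZero n] {j : ZMod n} (hl : leftLab n τ j = false) :
    ∃ (p : ZMod n) (t : ℕ), t + 1 < n ∧ j = p + t + 1 ∧ leftLab n τ p = true ∧
      ∀ i < t, leftLab n τ (p + i + 1) = false := by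
  obtain ⟨j₀, hj₀⟩ := exists_leftLab_eq_true τ
  have hj₀' : leftLab n τ (j - (j - j₀).val) = true := by simpa using hj₀
  have hex : ∃ k : ℕ, leftLab n τ (j - k) = true := ⟨_, hj₀'⟩
  obtain ⟨t, ht⟩ := Nat.exists_eq_succ_of_ne_zero (by simp [hl] : Nat.find hex ≠ 0)
  have hlt : Nat.find hex < n := (Nat.find_le hj₀').trans_lt (ZMod.val_lt _)
  refine ⟨j - (t + 1 : ℕ), t, by omega, by push_cast; ring, ?_, fun i hi => ?_⟩
  · have hspec := Nat.find_spec hex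
    rwa [ht] at hspec
  have hmin := Nat.find_min hex (show t - i < Nat.find hex by omega)
  have heq : j - ((t + 1 : ℕ) : ZMod n) + i + 1 = j - ((t - i : ℕ) : ZMod n) := by
    push_cast [Nat.cast_sub hi.le]
    ring
  rw [heq]
  simpa using hmin

def minLab (n : ℕ) (τ : ZMod n → ℕ) (j : ZMod n) : Bool := lab n τ (j - 1) j && lab n τ (j + 1) j

lemma range_minLab [NeZero n] : Set.range (minLab n) = {v | ∃ j, v j = true} := by
  refine Set.Subset.antisymm (Set.range_subset_iff.2 fun τ => ?_) ?_
  · obtain ⟨j, hj⟩ := Finite.exists_min τ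
    exact ⟨j, by simp [minLab, lab, hj]⟩
  rintro v ⟨j₀, hj₀⟩
  have hex : ∀ j, ∃ k : ℕ, v (j - k) = true ∨ v (j + k) = true :=
    fun j => ⟨(j - j₀).val, Or.inl (by simpa using hj₀)⟩
  refine ⟨fun j => Nat.find (hex j), funext fun j => ?_⟩
  cases hv : v j
  · obtain ⟨k, hk⟩ := Nat.exists_eq_succ_of_ne_zero (by simp [hv] : Nat.find (hex j) ≠ 0)
    have hjk := Nat.find_spec (hex j)
    rw [hk, Nat.cast_succ] at hjk
    simp only [minLab, lab, Bool.and_eq_false_iff, decide_eq_false_iff_not, not_le, hk]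
    rcases hjk with hjk | hjk
    · refine Or.inl (Nat.lt_succ_of_le (Nat.find_le (Or.inl ?_)))
      rwa [sub_sub, add_comm]
    · refine Or.inr (Nat.lt_succ_of_le (Nat.find_le (Or.inr ?_)))
      rwa [add_assoc, add_comm 1]
  · have h0 : Nat.find (hex j) = 0 := (Nat.find_eq_zero _).2 (by simp [hv])
    simp [minLab, lab, h0]

lemma add_natCast_ne_self (p : ZMod n) {k : ℕ} (h0 : 0 < k) (hk : k < n) : p + k ≠ p := by
  rw [Ne, add_eq_left, ZMod.natCast_eq_zero_iff]
  exact Nat.not_dvd_of_pos_of_lt h0 hk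

def rule28 : Bool → Bool → Bool → Bool := fun a b c => (!a && b) || (a && !b && !c)

def rule32 : Bool → Bool → Bool → Bool := fun a b c => a && !b && c

def rule44 : Bool → Bool → Bool → Bool := fun a b c => (!a && b) || (a && !b && c)

def rule140 : Bool → Bool → Bool → Bool := fun a b c => b && (!a || c)

lemma ecaAsync_rule32 (τ : ZMod n → ℕ) (x : ZMod n → Bool) (j : ZMod n) :
    ecaAsync n rule32 τ x j = (minLab n τ j && ecaSync n rule32 x j) := by
  rw [ecaAsync_apply]
  by_cases hl : τ (j - 1) < τ j
  · rw [if_pos hl, ecaAsync_apply _ τ x (j - 1), sub_add_cancel,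
      if_neg (show ¬τ j < τ (j - 1) by omega)]
    simp only [minLab, lab, ecaSync, rule32, hl.not_ge, decide_false, Bool.false_and]
    cases x j <;> simp
  · by_cases hr : τ (j + 1) < τ j
    · rw [if_neg hl, if_pos hr, ecaAsync_apply _ τ x (j + 1), add_sub_cancel_right,
        if_neg (show ¬τ j < τ (j + 1) by omega)]
      simp only [minLab, lab, ecaSync, rule32, hr.not_ge, decide_false, Bool.and_false]
      cases x j <;> simp
    · rw [if_neg hl, if_neg hr]
      simp [minLab, lab, ecaSync, not_lt.1 hl, not_lt.1 hr]

lemma minLab_eq_true_iff (hn : 1 < n) {j : ZMod n} :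
    minLab n τ j = true ↔ ∀ x, ecaAsync n rule32 τ x j = ecaSync n rule32 x j := by
  refine ⟨fun hm x => by simp [ecaAsync_rule32, hm], fun hsync => ?_⟩
  by_contra hm
  set x := Function.update (fun _ => true) j false
  have hnext : x (j + 1) = true :=
    Function.update_of_ne (by simpa using add_natCast_ne_self j one_pos hn) _ _
  have hprev : x (j - 1) = true :=
    Function.update_of_ne (by simpa using (add_natCast_ne_self (j - 1) one_pos hn).symm) _ _
  have hsame := hsync x
  simp [ecaAsync_rule32, ecaSync, rule32, hm, hnext, hprev, x] at hsame

lemma exists_ne_ecaSync_rule28 (hn : 3 < n) {j : ZMod n} (hl : leftLab n τ j = false) :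
    ∃ x, ecaAsync n rule28 τ x j ≠ ecaSync n rule28 x j := by
  have hright : ∀ a b c d, rule28 a b (rule28 b c d) = rule28 a b c := by decide
  obtain ⟨p, rfl⟩ : ∃ p, j = p + 1 + 1 + 1 := ⟨j - 3, by ring⟩
  set x := Function.update (fun _ => true) p false
  have hx : ∀ k : ℕ, 0 < k → k < n → x (p + k) = true := fun k h0 hk =>
    Function.update_of_ne (add_natCast_ne_self p h0 hk) _ _
  have hx0 : x p = false := Function.update_self _ _ _
  have hx1 : x (p + 1) = true := by simpa using hx 1 (by omega) (by omega)
  have hx2 : x (p + 1 + 1) = true := by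
    simpa [add_assoc, one_add_one_eq_two] using hx 2 (by omega) (by omega)
  have hx3 : x (p + 1 + 1 + 1) = true := by
    simpa [add_assoc, one_add_one_eq_two, two_add_one_eq_three] using hx 3 (by omega) (by omega)
  have hf0 : ecaAsync n rule28 τ x p = false := by
    rw [ecaAsync_apply_of_absorbing hright, hx0, hx1]
    simp [rule28]
  have hf1 : ecaAsync n rule28 τ x (p + 1) = true := by
    rw [ecaAsync_add_one_of_absorbing hright, hx1, hx0, hf0]
    split <;> rfl
  have hf2 : ecaAsync n rule28 τ x (p + 1 + 1) = false := by
    rw [ecaAsync_add_one_of_absorbing hright, hx1, hx2, hf1]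
    split <;> rfl
  refine ⟨x, ?_⟩
  rw [ecaAsync_add_one_of_absorbing hright, hl, hf2, hx3]
  simp [ecaSync, hx2, hx3, rule28]

lemma exists_ne_ecaSync_rule44 (hn : 1 < n) {j : ZMod n} (hl : leftLab n τ j = false) :
    ∃ x, ecaAsync n rule44 τ x j ≠ ecaSync n rule44 x j := by
  have : NeZero n := ⟨by omega⟩
  have hright : ∀ a b c d, rule44 a b (rule44 b c d) = rule44 a b c := by decide
  have hflip : ∀ a c, rule44 a true c = !a := by decide
  obtain ⟨p, t, htn, rfl, hp, hrun⟩ := exists_leftLab_run hl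
  -- The state computed at `p` is negated at each of the `t` steps of the run up to `j - 1`,
  -- so the value placed at `p` is chosen by the parity of `t`.
  set x := Function.update (fun _ => true) p (decide (Even t))
  have hx : ∀ k : ℕ, 0 < k → k < n → x (p + k) = true := fun k h0 hk =>
    Function.update_of_ne (add_natCast_ne_self p h0 hk) _ _
  have hxt : x (p + t) = true := by
    rcases Nat.eq_zero_or_pos t with rfl | ht
    · simp [x]
    · exact hx t ht (by omega)
  have hx0 : x p = decide (Even t) := Function.update_self _ _ _
  have hfp : ecaAsync n rule44 τ x p = !decide (Even t) := by
    have hprev : x (p - 1) = true :=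
      Function.update_of_ne (by simpa using (add_natCast_ne_self (p - 1) one_pos hn).symm) _ _
    rw [ecaAsync_apply_of_absorbing hright, hp, if_pos rfl, hprev, hx0,
      (by simpa using hx 1 one_pos hn : x (p + 1) = true)]
    cases decide (Even t) <;> rfl
  have hfpt : ecaAsync n rule44 τ x (p + t) = false := by
    rw [ecaAsync_add_natCast_eq_xor hright hflip fun i hi =>
      ⟨hrun i hi, by simpa [add_assoc] using hx (i + 1) i.succ_pos (by omega)⟩, hfp]
    simp [← Nat.not_even_iff_odd]
  refine ⟨x, ?_⟩
  rw [ecaAsync_add_one_of_absorbing hright, hl, hfpt]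
  simp [ecaSync, hxt, rule44, (by simpa [add_assoc] using hx (t + 1) t.succ_pos htn :
    x (p + t + 1) = true)]

lemma exists_ne_ecaSync_rule140_reverse (hn : 3 < n) {j : ZMod n} (hl : leftLab n τ j = false) :
    ∃ x, ecaAsync n (fun a b c => rule140 c b a) τ x j ≠
      ecaSync n (fun a b c => rule140 c b a) x j := by
  have hright : ∀ a b c d, rule140 (rule140 d c b) b a = rule140 c b a := by decide
  obtain ⟨p, rfl⟩ : ∃ p, j = p + 1 + 1 := ⟨j - 2, by ring⟩
  set x := Function.update (fun _ => true) p false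
  have hx : ∀ k : ℕ, 0 < k → k < n → x (p + k) = true := fun k h0 hk =>
    Function.update_of_ne (add_natCast_ne_self p h0 hk) _ _
  have hx0 : x p = false := Function.update_self _ _ _
  have hx1 : x (p + 1) = true := by simpa using hx 1 (by omega) (by omega)
  have hx2 : x (p + 1 + 1) = true := by
    simpa [add_assoc, one_add_one_eq_two] using hx 2 (by omega) (by omega)
  have hx3 : x (p + 1 + 1 + 1) = true := by
    simpa [add_assoc, one_add_one_eq_two, two_add_one_eq_three] using hx 3 (by omega) (by omega)
  have hf0 : ecaAsync n (fun a b c => rule140 c b a) τ x p = false := by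
    rw [ecaAsync_apply_of_absorbing hright, hx0]
    simp [rule140]
  have hf1 : ecaAsync n (fun a b c => rule140 c b a) τ x (p + 1) = false := by
    rw [ecaAsync_add_one_of_absorbing hright, hx0, hx1, hx2, hf0]
    split <;> rfl
  refine ⟨x, ?_⟩
  rw [ecaAsync_add_one_of_absorbing hright, hl, hf1]
  simp [ecaSync, hx1, hx2, hx3, rule140]

lemma ncard_setOf_ecaAsync_rule28 (hn : 3 < n) :
    {g | ∃ τ, g = ecaAsync n rule28 τ}.ncard = 2 ^ n - 1 :=
  have : NeZero n := ⟨by omega⟩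
  ncard_setOf_ecaAsync_of_absorbing (by decide) fun _ _ => exists_ne_ecaSync_rule28 hn

lemma ncard_setOf_ecaAsync_rule32 (hn : 1 < n) :
    {g | ∃ τ, g = ecaAsync n rule32 τ}.ncard = 2 ^ n - 1 := by
  have : NeZero n := ⟨by omega⟩
  have hdet (τ τ' : ZMod n → ℕ) (hτ : minLab n τ = minLab n τ') :
      ecaAsync n rule32 τ = ecaAsync n rule32 τ' := by
    funext x j
    rw [ecaAsync_rule32, ecaAsync_rule32, hτ]
  rw [ncard_setOf_eq_of_eq_iff fun τ τ' =>
      ecaAsync_eq_iff_of_labels (minLab n) hdet fun τ j => minLab_eq_true_iff hn,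
    range_minLab, ncard_exists_eq_true]

lemma ncard_setOf_ecaAsync_rule44 (hn : 1 < n) :
    {g | ∃ τ, g = ecaAsync n rule44 τ}.ncard = 2 ^ n - 1 :=
  have : NeZero n := ⟨by omega⟩
  ncard_setOf_ecaAsync_of_absorbing (by decide) fun _ _ => exists_ne_ecaSync_rule44 hn

lemma ncard_setOf_ecaAsync_rule140 (hn : 3 < n) :
    {g | ∃ τ, g = ecaAsync n rule140 τ}.ncard = 2 ^ n - 1 :=
  have : NeZero n := ⟨by omega⟩
  (ncard_setOf_ecaAsync_reverse _).trans <|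
    ncard_setOf_ecaAsync_of_absorbing (by decide) fun _ _ => exists_ne_ecaSync_rule140_reverse hn

end ECA

/-- Rules 28, 32, 44, 140: the number of distinct asynchronous global
functions equals $2^n - 1$. -/
theorem rules_28_32_44_140_count (n : ℕ) (hn : 3 < n) :
    {g | ∃ τ : ZMod n → ℕ,
        g = ecaAsync n (fun a b c => (!a && b) || (a && !b && !c)) τ}.ncard = 2 ^ n - 1 ∧
    {g | ∃ τ : ZMod n → ℕ,
        g = ecaAsync n (fun a b c => a && !b && c) τ}.ncard = 2 ^ n - 1 ∧
    {g | ∃ τ : ZMod n → ℕ,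
        g = ecaAsync n (fun a b c => (!a && b) || (a && !b && c)) τ}.ncard = 2 ^ n - 1 ∧
    {g | ∃ τ : ZMod n → ℕ,
        g = ecaAsync n (fun a b c => b && (!a || c)) τ}.ncard = 2 ^ n - 1 :=
  ⟨ECA.ncard_setOf_ecaAsync_rule28 hn, ECA.ncard_setOf_ecaAsync_rule32 (by omega),
    ECA.ncard_setOf_ecaAsync_rule44 (by omega), ECA.ncard_setOf_ecaAsync_rule140 hn⟩
end

section
/- For every n ≥ 1: the sum, over all cyclic Boolean words u : ℤ/nℤ → Bool, of 2^{p(u) − q(u)}, where p(u) = #{ i ∈ ℤ/nℤ : u_i = true } and q(u) = #{ i ∈ ℤ/nℤ : u_i = true and u_{i+1} = false } (note q(u) ≤ p(u) always), equals L(2n), the 2n-th Lucas number; equivalently it equals φ^{2n} + φ^{−2n} with φ = (1+√5)/2 the golden ratio. -/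
/-- The Lucas sequence: L(0)=2, L(1)=1, L(k+2)=L(k+1)+L(k). -/
def lucas : ℕ → ℕ
  | 0 => 2
  | 1 => 1
  | k + 2 => lucas (k + 1) + lucas k

open Finset Matrix

section TransferMatrix

variable {ι R : Type*} [Fintype ι] [DecidableEq ι] [CommSemiring R]

theorem sum_prod_path_mul_eq_sum_pow_apply_mul (M : Matrix ι ι R) (k : ℕ) (F : ι → ι → R) :
    ∑ u : Fin (k + 1) → ι,
        (∏ i : Fin k, M (u i.castSucc) (u i.succ)) * F (u 0) (u (Fin.last k)) =
      ∑ a, ∑ b, (M ^ k) a b * F a b := by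
  induction k generalizing F with
  | zero =>
    rw [← (Equiv.funUnique (Fin 1) ι).symm.sum_comp]
    simp [one_apply]
  | succ k ih =>
    rw [← (Fin.consEquiv fun _ => ι).sum_comp, Fintype.sum_prod_type]
    simp only [Fin.consEquiv_apply, Fin.prod_univ_succ, Fin.castSucc_zero, Fin.cons_zero,
      Fin.cons_succ, ← Fin.succ_castSucc, ← Fin.succ_last]
    calc _ = ∑ a, ∑ c, ∑ b, (M ^ k) c b * (M a c * F a b) := by
          refine sum_congr rfl fun a _ => ?_
          rw [← ih]
          exact sum_congr rfl fun v _ => by ring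
      _ = ∑ a, ∑ b, (M ^ (k + 1)) a b * F a b := by
          simp only [pow_succ', mul_apply, sum_mul]
          exact sum_congr rfl fun a _ => by rw [sum_comm]; simp only [mul_assoc, mul_left_comm]

theorem sum_prod_cyclic_eq_trace_pow (M : Matrix ι ι R) (m : ℕ) :
    ∑ u : Fin (m + 1) → ι, ∏ i, M (u i) (u (i + 1)) = trace (M ^ (m + 1)) := by
  have split (u : Fin (m + 1) → ι) : ∏ i, M (u i) (u (i + 1)) =
      (∏ i : Fin m, M (u i.castSucc) (u i.succ)) * M (u (Fin.last m)) (u 0) := by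
    rw [Fin.prod_univ_castSucc]
    simp only [Fin.coeSucc_eq_succ, Fin.last_add_one]
  simp only [split, pow_succ, trace, Matrix.diag, mul_apply]
  exact sum_prod_path_mul_eq_sum_pow_apply_mul M m fun a b => M b a

end TransferMatrix

/-- The Fibonacci matrix `!![0, 1; 1, 1]`, indexed by `Bool` with `false ↦ 0`. -/
def fibMatrix : Matrix Bool Bool ℕ := of fun a b => if a || b then 1 else 0

theorem fibMatrix_sq_apply (a b : Bool) : (fibMatrix ^ 2) a b = if a && b then 2 else 1 := by
  cases a <;> cases b <;> rfl

theorem fibMatrix_sq : fibMatrix ^ 2 = fibMatrix + 1 := by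
  ext a b
  cases a <;> cases b <;> rfl

theorem trace_fibMatrix_pow (k : ℕ) : trace (fibMatrix ^ k) = lucas k := by
  induction k using lucas.induct with
  | case1 => rfl
  | case2 => rfl
  | case3 k ih₁ ih₀ =>
    rw [lucas, ← ih₁, ← ih₀, ← trace_add]
    show trace (fibMatrix ^ (k + 2)) = _
    rw [pow_add, fibMatrix_sq, mul_add, mul_one, ← pow_succ]

theorem card_filter_sub_card_filter_and_not {α : Type*} (s : Finset α) (p q : α → Prop)
    [DecidablePred p] [DecidablePred q] :
    #{x ∈ s | p x} - #{x ∈ s | p x ∧ ¬q x} = #{x ∈ s | p x ∧ q x} := by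
  rw [← card_filter_add_card_filter_not (s := {x ∈ s | p x}) q, filter_filter, filter_filter,
    Nat.add_sub_cancel]

theorem two_pow_card_sub_card_eq_prod_fibMatrix_sq {α : Type*} [Fintype α] (u : α → Bool)
    (f : α → α) :
    2 ^ (#{i | u i = true} - #{i | u i = true ∧ u (f i) = false}) =
      ∏ i, (fibMatrix ^ 2) (u i) (u (f i)) := by
  simp only [← Bool.not_eq_true, card_filter_sub_card_filter_and_not, fibMatrix_sq_apply,
    Bool.and_eq_true, prod_ite, prod_const, one_pow, mul_one]

open Real goldenRatio in
theorem coe_lucas_eq (k : ℕ) : (lucas k : ℝ) = φ ^ k + ψ ^ k := by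
  induction k using lucas.induct with
  | case1 => norm_num [lucas]
  | case2 => norm_num [lucas]
  | case3 k ih₁ ih₀ =>
    rw [lucas, Nat.cast_add, ih₁, ih₀]
    show _ = φ ^ (k + 2) + ψ ^ (k + 2)
    linear_combination (-φ ^ k) * goldenRatio_sq - ψ ^ k * goldenConj_sq

theorem sum_two_pow_card_sub_card_eq_lucas (n : ℕ) [NeZero n] :
    ∑ u : ZMod n → Bool, 2 ^ (#{i | u i = true} - #{i | u i = true ∧ u (i + 1) = false}) =
      lucas (2 * n) := by
  obtain ⟨m, rfl⟩ := Nat.exists_eq_succ_of_ne_zero (NeZero.ne n)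
  -- `ZMod (m + 1)` is `Fin (m + 1)` by definition.
  calc _ = ∑ u : Fin (m + 1) → Bool, ∏ i, (fibMatrix ^ 2) (u i) (u (i + 1)) :=
        sum_congr rfl fun u _ => two_pow_card_sub_card_eq_prod_fibMatrix_sq u (· + 1)
    _ = lucas (2 * (m + 1)) := by
        rw [sum_prod_cyclic_eq_trace_pow, ← pow_mul, trace_fibMatrix_pow]

/-- The sum over all cyclic Boolean words $u$ of length $n$ of
$2^{p(u) - q(u)}$, where $p(u)$ counts  positions and $q(u)$ counts
positions with $u_i = $  and $u_{i+1} = $ , equals the Lucas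
number $L(2n)$, equivalently $φ^{2n} + φ^{-2n}$. -/
theorem sum_words_eq_lucas (n : ℕ) [NeZero n] :
    (∑ u : ZMod n → Bool,
        2 ^ ((Finset.univ.filter (fun i : ZMod n => u i = true)).card
          - (Finset.univ.filter (fun i : ZMod n => u i = true ∧ u (i + 1) = false)).card))
      = lucas (2 * n) ∧
    ((∑ u : ZMod n → Bool,
        2 ^ ((Finset.univ.filter (fun i : ZMod n => u i = true)).card
          - (Finset.univ.filter (fun i : ZMod n => u i = true ∧ u (i + 1) = false)).card)
        : ℕ) : ℝ)
      = ((1 + Real.sqrt 5) / 2) ^ (2 * n) + (((1 + Real.sqrt 5) / 2)⁻¹) ^ (2 * n) := by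
  refine ⟨sum_two_pow_card_sub_card_eq_lucas n, ?_⟩
  rw [sum_two_pow_card_sub_card_eq_lucas, coe_lucas_eq, Real.inv_goldenRatio,
    (even_two_mul n).neg_pow]
end
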